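/- arXiv:1507.01238 — 2 statements merged into one kernel-verified Lean document; each statement's English description precedes it below -/
import Mathlib

section
/- Fix x_j ∈ S_i. If for every residual direction w ∈ W_j^i it holds that max_{x ∈ ∪_{k≠i} X^k} |w^⊤ x| < max_{x ∈ X^i \ {x_j}} |w^⊤ x|, then OMP(X_{-j}, x_j) with ε = 0 produces a subspace-preserving representation of x_j, and it terminates in at most d_i iterations. -/
open scoped RealInnerProductSpace Classical

noncomputable section

namespace SSCOMP

variable {D : ℕ}

noncomputable def ompSelect {ι : Type*} [Fintype ι] [LinearOrder ι] [Nonempty ι]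
    (a : ι → EuclideanSpace ℝ (Fin D)) (q : EuclideanSpace ℝ (Fin D)) : ι :=
  (Finset.univ.filter fun i => ∀ m, |⟪a m, q⟫| ≤ |⟪a i, q⟫|).min' (by
    obtain ⟨i, -, hi⟩ := Finset.exists_max_image (Finset.univ : Finset ι)
      (fun m => |⟪a m, q⟫|) Finset.univ_nonempty
    exact ⟨i, Finset.mem_filter.mpr ⟨Finset.mem_univ i, fun m => hi m (Finset.mem_univ m)⟩⟩)

noncomputable def ompState {ι : Type*} [Fintype ι] [LinearOrder ι]
    (a : ι → EuclideanSpace ℝ (Fin D)) (b : EuclideanSpace ℝ (Fin D)) :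
    ℕ → Finset ι × EuclideanSpace ℝ (Fin D)
  | 0 => (∅, b)
  | k + 1 =>
    let s := ompState a b k
    if s.2 = 0 then s
    else if h : Nonempty ι then
      haveI := h
      let T' : Finset ι := insert (ompSelect a s.2) s.1
      (T', b - (Submodule.orthogonalProjection (Submodule.span ℝ (a '' (T' : Set ι))) b :
        EuclideanSpace ℝ (Fin D)))
    else s

noncomputable def ompSupport {ι : Type*} [Fintype ι] [LinearOrder ι]
    (a : ι → EuclideanSpace ℝ (Fin D)) (b : EuclideanSpace ℝ (Fin D)) (k : ℕ) : Finset ι :=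
  (ompState a b k).1

noncomputable def ompResidual {ι : Type*} [Fintype ι] [LinearOrder ι]
    (a : ι → EuclideanSpace ℝ (Fin D)) (b : EuclideanSpace ℝ (Fin D)) (k : ℕ) :
    EuclideanSpace ℝ (Fin D) :=
  (ompState a b k).2

def IsOMPOutput {ι : Type*} [Fintype ι] [LinearOrder ι]
    (a : ι → EuclideanSpace ℝ (Fin D)) (b : EuclideanSpace ℝ (Fin D)) (kmax : ℕ)
    (c : ι → ℝ) : Prop :=
  (∀ m, c m ≠ 0 → m ∈ ompSupport a b kmax) ∧
  ∀ c' : ι → ℝ, (∀ m, c' m ≠ 0 → m ∈ ompSupport a b kmax) →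
    ‖b - ∑ m, c m • a m‖ ≤ ‖b - ∑ m, c' m • a m‖

/-- Set of normalized nonzero residual directions of OMP(a, b) run with `ε = 0`
and `k_max` large enough. -/
noncomputable def residualDirs {ι : Type*} [Fintype ι] [LinearOrder ι]
    (a : ι → EuclideanSpace ℝ (Fin D)) (b : EuclideanSpace ℝ (Fin D)) :
    Set (EuclideanSpace ℝ (Fin D)) :=
  {w | ∃ k, ompResidual a b k ≠ 0 ∧ w = ‖ompResidual a b k‖⁻¹ • ompResidual a b k}

/-- Coherence between two sets of unit-norm points. -/
noncomputable def coherence (A B : Set (EuclideanSpace ℝ (Fin D))) : ℝ :=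
  sSup {r : ℝ | ∃ u ∈ A, ∃ v ∈ B, r = |⟪u, v⟫|}

/-- Symmetrized convex hull `conv(±A)`. -/
noncomputable def symmHull (A : Set (EuclideanSpace ℝ (Fin D))) :
    Set (EuclideanSpace ℝ (Fin D)) :=
  convexHull ℝ (A ∪ (-A))

/-- Inradius of a convex body: the radius of the largest Euclidean ball
(within the linear span of the body) inscribed in it. -/
noncomputable def inradius (P : Set (EuclideanSpace ℝ (Fin D))) : ℝ :=
  sSup {r : ℝ | 0 ≤ r ∧ ∃ c ∈ Submodule.span ℝ P,
    ∀ y ∈ Submodule.span ℝ P, ‖y - c‖ ≤ r → y ∈ P}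

variable {n N : ℕ}

/-- `X^i`: the set of data points lying in the `i`-th subspace. -/
noncomputable def subX (S : Fin n → Submodule ℝ (EuclideanSpace ℝ (Fin D)))
    (x : Fin N → EuclideanSpace ℝ (Fin D)) (i : Fin n) : Set (EuclideanSpace ℝ (Fin D)) :=
  x '' {m | x m ∈ S i}

/-- `X^i_{-j}`: the set of data points lying in the `i`-th subspace, with `x j` removed. -/
noncomputable def subXmin (S : Fin n → Submodule ℝ (EuclideanSpace ℝ (Fin D)))
    (x : Fin N → EuclideanSpace ℝ (Fin D)) (i : Fin n) (j : Fin N) :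
    Set (EuclideanSpace ℝ (Fin D)) :=
  x '' {m | x m ∈ S i ∧ m ≠ j}

/-- `W_j^i`: the set of OMP residual directions associated with `X^i_{-j}` and `x j`. -/
noncomputable def Wji (S : Fin n → Submodule ℝ (EuclideanSpace ℝ (Fin D)))
    (x : Fin N → EuclideanSpace ℝ (Fin D)) (i : Fin n) (j : Fin N) :
    Set (EuclideanSpace ℝ (Fin D)) :=
  residualDirs (fun m : {m : Fin N // x m ∈ S i ∧ m ≠ j} => x m.1) (x j)

/-- `W^i`: the set of OMP residual directions associated with `X^i`. -/
noncomputable def Wfull (S : Fin n → Submodule ℝ (EuclideanSpace ℝ (Fin D)))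
    (x : Fin N → EuclideanSpace ℝ (Fin D)) (i : Fin n) : Set (EuclideanSpace ℝ (Fin D)) :=
  ⋃ j ∈ {j : Fin N | x j ∈ S i}, Wji S x i j

/-- `r_i := min_{j : x_j ∈ S_i} r(P^i_{-j})`. -/
noncomputable def rMin (S : Fin n → Submodule ℝ (EuclideanSpace ℝ (Fin D)))
    (x : Fin N → EuclideanSpace ℝ (Fin D)) (i : Fin n) : ℝ :=
  sInf {r : ℝ | ∃ j, x j ∈ S i ∧ r = inradius (symmHull (subXmin S x i j))}

/-- Cosine of the principal angle between two subspaces. -/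
noncomputable def cosAngle (Si Sk : Submodule ℝ (EuclideanSpace ℝ (Fin D))) : ℝ :=
  sSup {r : ℝ | ∃ u ∈ Si, ∃ v ∈ Sk, ‖u‖ = 1 ∧ ‖v‖ = 1 ∧ r = ⟪u, v⟫}

/-! Restricted to the atoms of `S i`, OMP only ever selects atoms of `S i`, and the dual condition
says that at each residual of that restricted run some atom of `S i` beats every atom of the other
subspaces. Hence OMP on the whole dictionary makes exactly the same choices, step by step, as the
restricted run. Since the residual is always orthogonal to the atoms already chosen, each step of
the restricted run enlarges the span of the chosen atoms inside `S i`; after `dim S i` steps that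
span is `S i ∋ x j`, and the residual vanishes. -/

open Submodule Module

section OMP

variable {ι : Type*} [Fintype ι] [LinearOrder ι]
  (a : ι → EuclideanSpace ℝ (Fin D)) (b : EuclideanSpace ℝ (Fin D))

lemma abs_inner_le_ompSelect [Nonempty ι] (q : EuclideanSpace ℝ (Fin D)) (m : ι) :
    |⟪a m, q⟫| ≤ |⟪a (ompSelect a q), q⟫| := by
  unfold ompSelect
  exact (Finset.mem_filter.mp (Finset.min'_mem
    (Finset.univ.filter fun i => ∀ m, |⟪a m, q⟫| ≤ |⟪a i, q⟫|) _)).2 m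

lemma ompSelect_le [Nonempty ι] (q : EuclideanSpace ℝ (Fin D)) {s : ι}
    (hs : ∀ m, |⟪a m, q⟫| ≤ |⟪a s, q⟫|) : ompSelect a q ≤ s :=
  Finset.min'_le _ _ (Finset.mem_filter.mpr ⟨Finset.mem_univ _, hs⟩)

lemma ompState_succ_of_ompResidual_eq_zero {k : ℕ} (h : ompResidual a b k = 0) :
    ompState a b (k + 1) = ompState a b k := by
  unfold ompResidual at h
  rw [ompState, if_pos h]

lemma ompState_succ_of_ompResidual_ne_zero [Nonempty ι] {k : ℕ} (h : ompResidual a b k ≠ 0) :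
    ompState a b (k + 1) =
      (insert (ompSelect a (ompResidual a b k)) (ompSupport a b k),
        b - (span ℝ (a '' ↑(insert (ompSelect a (ompResidual a b k))
          (ompSupport a b k)))).starProjection b) := by
  unfold ompResidual at h
  rw [ompState, if_neg h, dif_pos ‹_›]
  rfl

lemma ompSupport_succ_of_ompResidual_ne_zero [Nonempty ι] {k : ℕ} (h : ompResidual a b k ≠ 0) :
    ompSupport a b (k + 1) = insert (ompSelect a (ompResidual a b k)) (ompSupport a b k) :=
  congrArg Prod.fst (ompState_succ_of_ompResidual_ne_zero a b h)

lemma ompResidual_succ_of_ompResidual_ne_zero [Nonempty ι] {k : ℕ} (h : ompResidual a b k ≠ 0) :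
    ompResidual a b (k + 1) = b - (span ℝ
      (a '' ↑(insert (ompSelect a (ompResidual a b k)) (ompSupport a b k)))).starProjection b :=
  congrArg Prod.snd (ompState_succ_of_ompResidual_ne_zero a b h)

lemma ompResidual_succ_eq_zero {k : ℕ} (h : ompResidual a b k = 0) :
    ompResidual a b (k + 1) = 0 := by
  rw [ompResidual, ompState_succ_of_ompResidual_eq_zero a b h]
  exact h

lemma ompResidual_eq_sub_starProjection (k : ℕ) :
    ompResidual a b k = b - (span ℝ (a '' ↑(ompSupport a b k))).starProjection b := by
  induction k with
  | zero => simp [ompResidual, ompSupport, ompState]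
  | succ k ih =>
    by_cases hr : ompResidual a b k = 0
    · rw [ompResidual, ompSupport, ompState_succ_of_ompResidual_eq_zero a b hr]
      exact ih
    · by_cases hι : Nonempty ι
      · rw [ompResidual, ompSupport, ompState_succ_of_ompResidual_ne_zero a b hr]
      · unfold ompResidual ompSupport at *
        rw [ompState, if_neg hr, dif_neg hι]
        exact ih

lemma ompResidual_mem_orthogonal (k : ℕ) :
    ompResidual a b k ∈ (span ℝ (a '' ↑(ompSupport a b k)))ᗮ := by
  rw [ompResidual_eq_sub_starProjection]
  exact sub_starProjection_mem_orthogonal b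

lemma ompSelect_notMem_span [Nonempty ι] {k : ℕ} {m : ι} (hm : ⟪a m, ompResidual a b k⟫ ≠ 0) :
    a (ompSelect a (ompResidual a b k)) ∉ span ℝ (a '' ↑(ompSupport a b k)) := fun hmem => by
  have hsel := (mem_orthogonal _ _).mp (ompResidual_mem_orthogonal a b k) _ hmem
  have hle := abs_inner_le_ompSelect a (ompResidual a b k) m
  rw [hsel, abs_zero] at hle
  exact hm (abs_nonpos_iff.mp hle)

variable {a b}

lemma le_finrank_span_ompSupport
    (hcorr : ∀ k, ompResidual a b k ≠ 0 → ∃ m, ⟪a m, ompResidual a b k⟫ ≠ 0) :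
    ∀ k, ompResidual a b k ≠ 0 → k ≤ finrank ℝ (span ℝ (a '' ↑(ompSupport a b k))) := by
  intro k
  induction k with
  | zero => exact fun _ => Nat.zero_le _
  | succ k ih =>
    intro hk1
    have hk : ompResidual a b k ≠ 0 := mt (ompResidual_succ_eq_zero a b) hk1
    obtain ⟨m, hm⟩ := hcorr k hk
    have : Nonempty ι := ⟨m⟩
    have hlt : span ℝ (a '' ↑(ompSupport a b k)) < span ℝ (a '' ↑(ompSupport a b (k + 1))) := by
      rw [ompSupport_succ_of_ompResidual_ne_zero a b hk, Finset.coe_insert,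
        Set.image_insert_eq, span_insert]
      exact SetLike.lt_iff_le_and_exists.mpr ⟨le_sup_right, _,
        mem_sup_left (mem_span_singleton_self _), ompSelect_notMem_span a b hm⟩
    have := finrank_lt_finrank_of_lt hlt
    have := ih hk
    omega

lemma ompResidual_finrank_eq_zero {V : Submodule ℝ (EuclideanSpace ℝ (Fin D))}
    (ha : ∀ m, a m ∈ V) (hb : b ∈ V)
    (hcorr : ∀ k, ompResidual a b k ≠ 0 → ∃ m, ⟪a m, ompResidual a b k⟫ ≠ 0) :
    ompResidual a b (finrank ℝ V) = 0 := by
  by_contra hne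
  have hle : span ℝ (a '' ↑(ompSupport a b (finrank ℝ V))) ≤ V :=
    span_le.mpr (by rintro _ ⟨m, -, rfl⟩; exact ha m)
  have heq := eq_of_le_of_finrank_le hle (le_finrank_span_ompSupport hcorr _ hne)
  rw [ompResidual_eq_sub_starProjection, heq, starProjection_eq_self_iff.mpr hb, sub_self] at hne
  exact hne rfl

end OMP

section Restriction

variable {ι₁ ι₂ : Type*} [Fintype ι₁] [LinearOrder ι₁] [Fintype ι₂] [LinearOrder ι₂]
  (e : ι₂ ↪o ι₁) (a : ι₁ → EuclideanSpace ℝ (Fin D))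

-- Ties are broken by the smallest index in both dictionaries, and `e` is monotone.
lemma ompSelect_eq_of_dominant [Nonempty ι₁] [Nonempty ι₂] (q : EuclideanSpace ℝ (Fin D))
    (hdom : ∀ m ∉ Set.range e, ∃ m', |⟪a m, q⟫| < |⟪a (e m'), q⟫|) :
    ompSelect a q = e (ompSelect (a ∘ e) q) := by
  have hsel : ∀ m', |⟪a (e m'), q⟫| ≤ |⟪a (e (ompSelect (a ∘ e) q)), q⟫| :=
    abs_inner_le_ompSelect (a ∘ e) q
  have hmax : ∀ m, |⟪a m, q⟫| ≤ |⟪a (e (ompSelect (a ∘ e) q)), q⟫| := by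
    intro m
    by_cases hm : m ∈ Set.range e
    · obtain ⟨m', rfl⟩ := hm
      exact hsel m'
    · obtain ⟨m', hm'⟩ := hdom m hm
      exact hm'.le.trans (hsel m')
  obtain ⟨t, ht⟩ : ompSelect a q ∈ Set.range e := by
    by_contra hm
    obtain ⟨m', hm'⟩ := hdom _ hm
    exact (abs_inner_le_ompSelect a q (e m')).not_gt hm'
  refine le_antisymm (ompSelect_le a q hmax) ?_
  rw [← ht]
  exact e.monotone (ompSelect_le (a ∘ e) q fun m' =>
    (abs_inner_le_ompSelect a q (e m')).trans_eq (by rw [← ht]; rfl))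

lemma ompState_eq_map_of_dominant (b : EuclideanSpace ℝ (Fin D))
    (hdom : ∀ k, ompResidual (a ∘ e) b k ≠ 0 → ∃ m₀, ∀ m ∉ Set.range e,
      |⟪a m, ompResidual (a ∘ e) b k⟫| < |⟪a (e m₀), ompResidual (a ∘ e) b k⟫|) (k : ℕ) :
    ompState a b k = ((ompSupport (a ∘ e) b k).map e.toEmbedding, ompResidual (a ∘ e) b k) := by
  induction k with
  | zero => simp [ompState, ompSupport, ompResidual]
  | succ k ih =>
    have hres : ompResidual a b k = ompResidual (a ∘ e) b k := congrArg Prod.snd ih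
    have hsupp : ompSupport a b k = (ompSupport (a ∘ e) b k).map e.toEmbedding :=
      congrArg Prod.fst ih
    by_cases hq : ompResidual (a ∘ e) b k = 0
    · rw [ompState_succ_of_ompResidual_eq_zero a b (hres ▸ hq), ih]
      simp only [ompSupport, ompResidual, ompState_succ_of_ompResidual_eq_zero (a ∘ e) b hq]
    · obtain ⟨m₀, hm₀⟩ := hdom k hq
      have : Nonempty ι₂ := ⟨m₀⟩
      have : Nonempty ι₁ := ⟨e m₀⟩
      rw [ompState_succ_of_ompResidual_ne_zero a b (hres ▸ hq),
        ompSupport_succ_of_ompResidual_ne_zero (a ∘ e) b hq,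
        ompResidual_succ_of_ompResidual_ne_zero (a ∘ e) b hq, hres, hsupp,
        ompSelect_eq_of_dominant e a _ fun m hm => ⟨m₀, hm₀ m hm⟩]
      ext1 <;> simp [Set.image_insert_eq, Set.image_image]

end Restriction

lemma exists_abs_gt_of_sSup_lt {ι : Type*} [Finite ι] {f : ι → ℝ} {p q : ι → Prop}
    (h : sSup {r | ∃ m, p m ∧ r = |f m|} < sSup {r | ∃ m, q m ∧ r = |f m|}) :
    ∃ m₀, q m₀ ∧ 0 < |f m₀| ∧ ∀ m, p m → |f m| < |f m₀| := by
  have hfin : ∀ s : ι → Prop, {r | ∃ m, s m ∧ r = |f m|}.Finite := fun s =>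
    (Set.finite_range fun m => |f m|).subset (by rintro _ ⟨m, -, rfl⟩; exact ⟨m, rfl⟩)
  have hp : 0 ≤ sSup {r | ∃ m, p m ∧ r = |f m|} :=
    Real.sSup_nonneg (by rintro _ ⟨m, -, rfl⟩; exact abs_nonneg _)
  have hq : {r | ∃ m, q m ∧ r = |f m|}.Nonempty := by
    by_contra hempty
    rw [Set.not_nonempty_iff_eq_empty.mp hempty, Real.sSup_empty] at h
    exact h.not_ge hp
  obtain ⟨m₀, hm₀, hsup⟩ := hq.csSup_mem (hfin q)
  rw [hsup] at h
  exact ⟨m₀, hm₀, hp.trans_lt h,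
    fun m hm => (le_csSup (hfin p).bddAbove ⟨m, hm, rfl⟩).trans_lt h⟩

lemma exists_dominant_of_dualCondition {n N : ℕ}
    (S : Fin n → Submodule ℝ (EuclideanSpace ℝ (Fin D))) (x : Fin N → EuclideanSpace ℝ (Fin D))
    (hmem : ∀ j, ∃ i, x j ∈ S i) (i : Fin n) (j : Fin N)
    (hcond : ∀ w ∈ Wji S x i j,
      sSup {r : ℝ | ∃ m, (∃ k, k ≠ i ∧ x m ∈ S k) ∧ r = |⟪w, x m⟫|} <
      sSup {r : ℝ | ∃ m, m ≠ j ∧ x m ∈ S i ∧ r = |⟪w, x m⟫|})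
    {q : EuclideanSpace ℝ (Fin D)} (hq : q ≠ 0) (hw : ‖q‖⁻¹ • q ∈ Wji S x i j) :
    ∃ m₀ : {m // x m ∈ S i ∧ m ≠ j},
      0 < |⟪x m₀, q⟫| ∧ ∀ m, x m ∉ S i → |⟪x m, q⟫| < |⟪x m₀, q⟫| := by
  have hnorm : 0 < ‖q‖ := norm_pos_iff.mpr hq
  have hscale : ∀ v, |⟪v, q⟫| = ‖q‖ * |⟪‖q‖⁻¹ • q, v⟫| := fun v => by
    rw [real_inner_smul_left, abs_mul, abs_inv, abs_norm, mul_inv_cancel_left₀ hnorm.ne',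
      real_inner_comm]
  obtain ⟨m₀, ⟨hm₀j, hm₀S⟩, hpos, hdom⟩ :=
    exists_abs_gt_of_sSup_lt (f := fun m => ⟪‖q‖⁻¹ • q, x m⟫)
      (p := fun m => ∃ k, k ≠ i ∧ x m ∈ S k) (q := fun m => m ≠ j ∧ x m ∈ S i)
      (by simpa only [and_assoc] using hcond _ hw)
  refine ⟨⟨m₀, hm₀S, hm₀j⟩, ?_, fun m hm => ?_⟩
  · rw [hscale]
    exact mul_pos hnorm hpos
  · obtain ⟨k, hk⟩ := hmem m
    rw [hscale, hscale]
    exact mul_lt_mul_of_pos_left (hdom m ⟨k, fun h => hm (h ▸ hk), hk⟩) hnorm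

theorem sscOmp_dualCondition_subspacePreserving_general
    {D n N : ℕ} (S : Fin n → Submodule ℝ (EuclideanSpace ℝ (Fin D)))
    (x : Fin N → EuclideanSpace ℝ (Fin D))
    (hmem : ∀ j, ∃ i, x j ∈ S i)
    (i : Fin n) (j : Fin N) (hj : x j ∈ S i)
    (hcond : ∀ w ∈ Wji S x i j,
      sSup {r : ℝ | ∃ m, (∃ k, k ≠ i ∧ x m ∈ S k) ∧ r = |⟪w, x m⟫|} <
      sSup {r : ℝ | ∃ m, m ≠ j ∧ x m ∈ S i ∧ r = |⟪w, x m⟫|}) :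
    (∀ c : {m : Fin N // m ≠ j} → ℝ,
      IsOMPOutput (fun m => x m.1) (x j) (N - 1) c →
      ∀ m, c m ≠ 0 → x m.1 ∈ S i) ∧
    ompResidual (fun m : {m : Fin N // m ≠ j} => x m.1) (x j) (Module.finrank ℝ ↥(S i)) = 0 := by
  let e : {m : Fin N // x m ∈ S i ∧ m ≠ j} ↪o {m : Fin N // m ≠ j} :=
    OrderEmbedding.ofStrictMono (fun m => ⟨m.1, m.2.2⟩) fun _ _ h => h
  have key := fun k hk => exists_dominant_of_dualCondition S x hmem i j hcond hk ⟨k, hk, rfl⟩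
  have hrun := ompState_eq_map_of_dominant e (fun m => x m.1) (x j) fun k hk =>
    let ⟨m₀, _, hm₀⟩ := key k hk
    ⟨m₀, fun m hm => hm₀ m fun h => hm ⟨⟨m, h, m.2⟩, rfl⟩⟩
  refine ⟨fun c hc m hcm => ?_, ?_⟩
  · have hm := hc.1 m hcm
    rw [ompSupport, hrun, Finset.mem_map] at hm
    obtain ⟨m', -, rfl⟩ := hm
    exact m'.2.1
  · rw [ompResidual, hrun]
    exact ompResidual_finrank_eq_zero (fun m => m.2.1) hj fun k hk =>
      let ⟨m₀, hpos, _⟩ := key k hk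
      ⟨m₀, abs_pos.mp hpos⟩

/-- Fix `x j ∈ S i`. If for every residual direction `w ∈ W_j^i` the maximal
inner product (in absolute value) of `w` with points of the other subspaces is smaller than
the maximal inner product with points of `X^i \ {x j}`, then `OMP(X₋ⱼ, x j)` run with `ε = 0`
gives a subspace-preserving representation of `x j`, and it terminates in at most
`d i = dim S i` iterations. -/
theorem sscOmp_dualCondition_subspacePreserving
    {D n N : ℕ} (S : Fin n → Submodule ℝ (EuclideanSpace ℝ (Fin D)))
    (x : Fin N → EuclideanSpace ℝ (Fin D))
    (hunit : ∀ j, ‖x j‖ = 1)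
    (hmem : ∀ j, ∃ i, x j ∈ S i)
    (hrank : ∀ i, ∀ j, x j ∈ S i → Submodule.span ℝ (subXmin S x i j) = S i)
    (i : Fin n) (j : Fin N) (hj : x j ∈ S i)
    (hcond : ∀ w ∈ Wji S x i j,
      sSup {r : ℝ | ∃ m, (∃ k, k ≠ i ∧ x m ∈ S k) ∧ r = |⟪w, x m⟫|} <
      sSup {r : ℝ | ∃ m, m ≠ j ∧ x m ∈ S i ∧ r = |⟪w, x m⟫|}) :
    (∀ c : {m : Fin N // m ≠ j} → ℝ,
      IsOMPOutput (fun m => x m.1) (x j) (N - 1) c →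
      ∀ m, c m ≠ 0 → x m.1 ∈ S i) ∧
    ompResidual (fun m : {m : Fin N // m ≠ j} => x m.1) (x j) (Module.finrank ℝ ↥(S i)) = 0 :=
  sscOmp_dualCondition_subspacePreserving_general S x hmem i j hj hcond

end SSCOMP
end
end

section
/- Fix i and suppose that for every k ≠ i it holds that μ(X^i, X^k) < r_i − √(2 − 2 r_i) · cos θ*_{i,k}, where θ*_{i,k} is the principal angle between S_i and S_k. Then for every k ≠ i it holds that μ(W^i, X^k) < r_i. Consequently, the sufficient condition of Dyer et al. implies the coherence–inradius condition max_{k ≠ i} μ(W^i, X^k) < r_i. -/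
open scoped RealInnerProductSpace Classical

noncomputable section

namespace SSCOMP

variable {D : ℕ}

variable {n N : ℕ}

/-!
A residual direction `w ∈ W^i_j` is a unit vector of `S_i = span X^i_{-j}`. The inscribed ball
of `conv(±X^i_{-j})`, of radius at least `r_i`, contains `r_i • w`, so some `±x ∈ ±X^i_{-j}` has
`⟪±x, w⟫ ≥ r_i`, i.e. `‖w ∓ x‖ ≤ √(2 - 2 r_i)`. For `v ∈ X^k`, splitting
`⟪w, v⟫ = ⟪±x, v⟫ + ⟪w ∓ x, v⟫` gives `|⟪w, v⟫| ≤ μ(X^i, X^k) + √(2 - 2 r_i) cos θ*_{i,k} < r_i`.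
-/

local notation "E" => EuclideanSpace ℝ (Fin D)

lemma ompResidual_mem {ι : Type*} [Fintype ι] [LinearOrder ι] {V : Submodule ℝ E}
    {a : ι → E} {b : E} (ha : ∀ m, a m ∈ V) (hb : b ∈ V) (k : ℕ) :
    ompResidual a b k ∈ V := by
  induction k with
  | zero => simpa [ompResidual, ompState] using hb
  | succ k ih =>
    rw [ompResidual, ompState]
    split_ifs
    · exact ih
    · exact sub_mem hb (Submodule.span_le.mpr
        (by rintro p ⟨m, -, rfl⟩; exact ha m) (Submodule.coe_mem _))
    · exact ih

lemma mem_and_norm_eq_one_of_mem_residualDirs {ι : Type*} [Fintype ι] [LinearOrder ι]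
    {V : Submodule ℝ E} {a : ι → E} {b w : E} (ha : ∀ m, a m ∈ V) (hb : b ∈ V)
    (hw : w ∈ residualDirs a b) : w ∈ V ∧ ‖w‖ = 1 := by
  obtain ⟨k, hk, rfl⟩ := hw
  exact ⟨V.smul_mem _ (ompResidual_mem ha hb k), norm_smul_inv_norm hk⟩

lemma coherence_nonneg (A B : Set E) : 0 ≤ coherence A B :=
  Real.sSup_nonneg fun _ ⟨_, _, _, _, hr⟩ => hr ▸ abs_nonneg _

lemma abs_inner_le_coherence {A B : Set E} (hA : ∀ a ∈ A, ‖a‖ ≤ 1) (hB : ∀ b ∈ B, ‖b‖ ≤ 1)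
    {a b : E} (ha : a ∈ A) (hb : b ∈ B) : |⟪a, b⟫| ≤ coherence A B := by
  refine le_csSup ⟨1, ?_⟩ ⟨a, ha, b, hb, rfl⟩
  rintro r ⟨a', ha', b', hb', rfl⟩
  calc |⟪a', b'⟫| ≤ ‖a'‖ * ‖b'‖ := abs_real_inner_le_norm a' b'
    _ ≤ 1 * 1 := mul_le_mul (hA a' ha') (hB b' hb') (norm_nonneg _) zero_le_one
    _ = 1 := one_mul 1

lemma abs_inner_le_cosAngle {Si Sk : Submodule ℝ E} {u v : E} (hu : u ∈ Si) (hv : v ∈ Sk)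
    (hu1 : ‖u‖ = 1) (hv1 : ‖v‖ = 1) : |⟪u, v⟫| ≤ cosAngle Si Sk := by
  have hbdd : BddAbove {r : ℝ | ∃ u ∈ Si, ∃ v ∈ Sk, ‖u‖ = 1 ∧ ‖v‖ = 1 ∧ r = ⟪u, v⟫} := by
    refine ⟨1, ?_⟩
    rintro r ⟨a, -, b, -, ha, hb, rfl⟩
    simpa [ha, hb] using real_inner_le_norm a b
  rcases abs_cases ⟪u, v⟫ with ⟨h, -⟩ | ⟨h, -⟩ <;> rw [h]
  · exact le_csSup hbdd ⟨u, hu, v, hv, hu1, hv1, rfl⟩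
  · exact le_csSup hbdd ⟨-u, neg_mem hu, v, hv, by rwa [norm_neg], hv1, by rw [inner_neg_left]⟩

lemma cosAngle_nonneg (Si Sk : Submodule ℝ E) : 0 ≤ cosAngle Si Sk := by
  rcases Set.eq_empty_or_nonempty {r : ℝ | ∃ u ∈ Si, ∃ v ∈ Sk, ‖u‖ = 1 ∧ ‖v‖ = 1 ∧ r = ⟪u, v⟫}
    with h | ⟨r, u, hu, v, hv, hu1, hv1, -⟩
  · rw [cosAngle, h, Real.sSup_empty]
  · exact (abs_nonneg _).trans (abs_inner_le_cosAngle hu hv hu1 hv1)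

lemma abs_inner_le_norm_mul_cosAngle {Si Sk : Submodule ℝ E} {u v : E} (hu : u ∈ Si)
    (hv : v ∈ Sk) (hv1 : ‖v‖ = 1) : |⟪u, v⟫| ≤ ‖u‖ * cosAngle Si Sk := by
  rcases eq_or_ne u 0 with rfl | hu0
  · simp
  have h := abs_inner_le_cosAngle (Si.smul_mem ‖u‖⁻¹ hu) hv (norm_smul_inv_norm hu0) hv1
  rw [real_inner_smul_left, abs_mul, abs_inv, abs_norm,
    inv_mul_le_iff₀ (norm_pos_iff.mpr hu0)] at h
  exact h

lemma span_symmHull (A : Set E) : Submodule.span ℝ (symmHull A) = Submodule.span ℝ A := by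
  refine le_antisymm (Submodule.span_le.mpr <| convexHull_min ?_ (Submodule.convex _))
    (Submodule.span_mono <| (Set.subset_union_left).trans (subset_convexHull ℝ _))
  rintro p (hp | hp)
  · exact Submodule.subset_span hp
  · simpa using neg_mem (Submodule.subset_span (R := ℝ) hp)

lemma neg_mem_symmHull {A : Set E} {p : E} (hp : p ∈ symmHull A) : -p ∈ symmHull A := by
  have h : -(A ∪ -A) = A ∪ -A := by ext q; simp [or_comm]
  rw [symmHull, ← h, convexHull_neg]
  exact Set.neg_mem_neg.mpr hp

lemma symmHull_subset_halfSpace {A : Set E} {w : E} {M : ℝ} (hM : ∀ p ∈ A, |⟪p, w⟫| ≤ M) :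
    symmHull A ⊆ {q | ⟪q, w⟫ ≤ M} := by
  refine convexHull_min ?_ (convex_halfSpace_le ⟨fun p q => inner_add_left p q w,
    fun c p => real_inner_smul_left p w c⟩ M)
  rintro p (hp | hp)
  · exact (le_abs_self _).trans (hM p hp)
  · have := hM _ hp
    rw [inner_neg_left, abs_neg] at this
    exact (le_abs_self _).trans this

lemma inradius_symmHull_le {A : Set E} {w : E} {M : ℝ} (hM0 : 0 ≤ M)
    (hM : ∀ p ∈ A, |⟪p, w⟫| ≤ M) (hw : w ∈ Submodule.span ℝ A) (hw1 : ‖w‖ = 1) :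
    inradius (symmHull A) ≤ M := by
  refine Real.sSup_le ?_ hM0
  rintro t ⟨ht, c, hc, hball⟩
  rw [← span_symmHull] at hw
  have hplus : c + t • w ∈ symmHull A :=
    hball _ (add_mem hc (Submodule.smul_mem _ t hw)) (by simp [norm_smul, hw1, abs_of_nonneg ht])
  have hminus : -(c - t • w) ∈ symmHull A := neg_mem_symmHull <|
    hball _ (sub_mem hc (Submodule.smul_mem _ t hw)) (by simp [norm_smul, hw1, abs_of_nonneg ht])
  have hmid : t • w ∈ symmHull A := by
    have h := convex_convexHull ℝ (A ∪ -A) hplus hminus (by norm_num : (0 : ℝ) ≤ 1 / 2)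
      (by norm_num : (0 : ℝ) ≤ 1 / 2) (by norm_num)
    rwa [show (1 / 2 : ℝ) • (c + t • w) + (1 / 2 : ℝ) • -(c - t • w) = t • w by module] at h
  simpa [real_inner_smul_left, real_inner_self_eq_norm_sq, hw1] using
    symmHull_subset_halfSpace hM hmid

lemma exists_inradius_symmHull_le_abs_inner {A : Set E} (hA : A.Finite) {w : E}
    (hw : w ∈ Submodule.span ℝ A) (hw1 : ‖w‖ = 1) :
    ∃ p ∈ A, inradius (symmHull A) ≤ |⟪p, w⟫| := by
  have hne : A.Nonempty := by
    by_contra h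
    rw [Set.not_nonempty_iff_eq_empty.mp h, Submodule.span_empty, Submodule.mem_bot] at hw
    simp [hw] at hw1
  obtain ⟨p, hp, hmax⟩ := Set.exists_max_image A (fun p => |⟪p, w⟫|) hA hne
  exact ⟨p, hp, inradius_symmHull_le (abs_nonneg _) hmax hw hw1⟩

lemma abs_inner_le_of_le_inner {Si Sk : Submodule ℝ E} {u y v : E} {ρ : ℝ}
    (hu : u ∈ Si) (hy : y ∈ Si) (hv : v ∈ Sk) (hu1 : ‖u‖ = 1) (hy1 : ‖y‖ = 1) (hv1 : ‖v‖ = 1)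
    (hρ : ρ ≤ ⟪y, u⟫) :
    |⟪u, v⟫| ≤ |⟪y, v⟫| + Real.sqrt (2 - 2 * ρ) * cosAngle Si Sk := by
  have hdist : ‖u - y‖ ≤ Real.sqrt (2 - 2 * ρ) := by
    rw [← abs_norm]
    refine Real.abs_le_sqrt ?_
    rw [norm_sub_sq_real, hu1, hy1, real_inner_comm]
    linarith
  calc |⟪u, v⟫| = |⟪y, v⟫ + ⟪u - y, v⟫| := by rw [inner_sub_left, add_sub_cancel]
    _ ≤ |⟪y, v⟫| + ‖u - y‖ * cosAngle Si Sk :=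
      (abs_add_le _ _).trans (add_le_add le_rfl (abs_inner_le_norm_mul_cosAngle
        (sub_mem hu hy) hv hv1))
    _ ≤ |⟪y, v⟫| + Real.sqrt (2 - 2 * ρ) * cosAngle Si Sk := by
      gcongr
      exact cosAngle_nonneg Si Sk

lemma abs_inner_le_of_le_abs_inner {Si Sk : Submodule ℝ E} {u y v : E} {ρ : ℝ}
    (hu : u ∈ Si) (hy : y ∈ Si) (hv : v ∈ Sk) (hu1 : ‖u‖ = 1) (hy1 : ‖y‖ = 1) (hv1 : ‖v‖ = 1)
    (hρ : ρ ≤ |⟪y, u⟫|) :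
    |⟪u, v⟫| ≤ |⟪y, v⟫| + Real.sqrt (2 - 2 * ρ) * cosAngle Si Sk := by
  rcases le_abs'.mp hρ with h | h
  · have := abs_inner_le_of_le_inner (ρ := ρ) hu (neg_mem hy) hv hu1 (by rwa [norm_neg]) hv1
      (by rw [inner_neg_left]; linarith)
    rwa [inner_neg_left, abs_neg] at this
  · exact abs_inner_le_of_le_inner hu hy hv hu1 hy1 hv1 h

lemma coherence_Wfull_le (S : Fin n → Submodule ℝ E) (x : Fin N → E) (i k : Fin n)
    (hunit : ∀ j, ‖x j‖ = 1)
    (hrank : ∀ j, x j ∈ S i → Submodule.span ℝ (subXmin S x i j) = S i) :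
    coherence (Wfull S x i) (subX S x k) ≤ coherence (subX S x i) (subX S x k) +
      Real.sqrt (2 - 2 * rMin S x i) * cosAngle (S i) (S k) := by
  have hX : ∀ i, ∀ a ∈ subX S x i, ‖a‖ ≤ 1 := by
    rintro i _ ⟨m, -, rfl⟩
    exact (hunit m).le
  refine Real.sSup_le ?_ (add_nonneg (coherence_nonneg _ _)
    (mul_nonneg (Real.sqrt_nonneg _) (cosAngle_nonneg _ _)))
  rintro _ ⟨w, hw, _, ⟨m, hm, rfl⟩, rfl⟩
  simp only [Wfull, Set.mem_ofPred_eq, Set.mem_iUnion] at hw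
  obtain ⟨j, hj, hw⟩ := hw
  obtain ⟨hwS, hw1⟩ := mem_and_norm_eq_one_of_mem_residualDirs (fun m => m.2.1) hj hw
  obtain ⟨_, ⟨m', hm', rfl⟩, hinr⟩ :=
    exists_inradius_symmHull_le_abs_inner (A := subXmin S x i j) ((Set.toFinite _).image x)
      (by rwa [hrank j hj]) hw1
  have hρ : rMin S x i ≤ inradius (symmHull (subXmin S x i j)) :=
    csInf_le ⟨0, by rintro _ ⟨_, -, rfl⟩; exact Real.sSup_nonneg fun _ hr => hr.1⟩ ⟨j, hj, rfl⟩
  calc |⟪w, x m⟫|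
      ≤ |⟪x m', x m⟫| + Real.sqrt (2 - 2 * rMin S x i) * cosAngle (S i) (S k) :=
        abs_inner_le_of_le_abs_inner hwS hm'.1 hm hw1 (hunit m') (hunit m) (hρ.trans hinr)
    _ ≤ _ := by
        gcongr
        exact abs_inner_le_coherence (hX i) (hX k) ⟨m', hm'.1, rfl⟩ ⟨m, hm, rfl⟩

lemma sSup_lt_of_finite {s : Set ℝ} {c : ℝ} (hs : s.Finite) (hlt : ∀ r ∈ s, r < c)
    (hc : 0 < c) : sSup s < c := by
  rcases s.eq_empty_or_nonempty with rfl | hne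
  · rwa [Real.sSup_empty]
  · exact (hs.csSup_lt_iff hne).mpr hlt

theorem dyerCondition_implies_coherenceInradiusCondition_general
    {D n N : ℕ} (S : Fin n → Submodule ℝ (EuclideanSpace ℝ (Fin D)))
    (x : Fin N → EuclideanSpace ℝ (Fin D))
    (hunit : ∀ j, ‖x j‖ = 1)
    (hrank : ∀ i, ∀ j, x j ∈ S i → Submodule.span ℝ (subXmin S x i j) = S i)
    (i : Fin n)
    (hr0 : 0 < rMin S x i)
    (hcond : ∀ k, k ≠ i → coherence (subX S x i) (subX S x k) <
      rMin S x i - Real.sqrt (2 - 2 * rMin S x i) * cosAngle (S i) (S k)) :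
    (∀ k, k ≠ i → coherence (Wfull S x i) (subX S x k) < rMin S x i) ∧
    sSup {r : ℝ | ∃ k, k ≠ i ∧ r = coherence (Wfull S x i) (subX S x k)} < rMin S x i := by
  have hlt : ∀ k, k ≠ i → coherence (Wfull S x i) (subX S x k) < rMin S x i := fun k hk =>
    (coherence_Wfull_le S x i k hunit (hrank i)).trans_lt (by linarith [hcond k hk])
  refine ⟨hlt, sSup_lt_of_finite ?_ ?_ hr0⟩
  · exact (Set.finite_range fun k => coherence (Wfull S x i) (subX S x k)).subset
      fun _ ⟨k, _, hr⟩ => ⟨k, hr.symm⟩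
  · rintro _ ⟨k, hk, rfl⟩
    exact hlt k hk

/-- Fix `i` and suppose that for every `k ≠ i`,
`μ(X^i, X^k) < r_i − √(2 − 2 r_i) · cos θ*_{i,k}`. Then for every `k ≠ i`,
`μ(W^i, X^k) < r_i`; consequently `max_{k ≠ i} μ(W^i, X^k) < r_i`. -/
theorem dyerCondition_implies_coherenceInradiusCondition
    {D n N : ℕ} (S : Fin n → Submodule ℝ (EuclideanSpace ℝ (Fin D)))
    (x : Fin N → EuclideanSpace ℝ (Fin D))
    (hunit : ∀ j, ‖x j‖ = 1)
    (hmem : ∀ j, ∃ i, x j ∈ S i)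
    (hrank : ∀ i, ∀ j, x j ∈ S i → Submodule.span ℝ (subXmin S x i j) = S i)
    (i : Fin n)
    (hr0 : 0 < rMin S x i) (hr1 : rMin S x i ≤ 1)
    (hcond : ∀ k, k ≠ i → coherence (subX S x i) (subX S x k) <
      rMin S x i - Real.sqrt (2 - 2 * rMin S x i) * cosAngle (S i) (S k)) :
    (∀ k, k ≠ i → coherence (Wfull S x i) (subX S x k) < rMin S x i) ∧
    sSup {r : ℝ | ∃ k, k ≠ i ∧ r = coherence (Wfull S x i) (subX S x k)} < rMin S x i :=
  dyerCondition_implies_coherenceInradiusCondition_general S x hunit hrank i hr0 hcond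

end SSCOMP
end
end
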